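/- Let J'(x,y,z) = x² + y² + z² − 2(xy + xz + yz). Then the matrix D(UP)(P₁) = [[2,2,−1],[1,0,0],[0,1,0]] preserves J', i.e. J'(D(UP)(P₁)·v) = J'(v) for every v ∈ ℝ³. -/
import Mathlib

/-- The quadratic form `J'`. -/
def Jform (v : Fin 3 → ℝ) : ℝ :=
  v 0 ^ 2 + v 1 ^ 2 + v 2 ^ 2 - 2 * (v 0 * v 1 + v 0 * v 2 + v 1 * v 2)

/-- The differential of `U ∘ P` at `P₁ = (1,1,1)`. -/
def DUP : Matrix (Fin 3) (Fin 3) ℝ := !![2, 2, -1; 1, 0, 0; 0, 1, 0]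

theorem DUP_preserves_Jform (v : Fin 3 → ℝ) :
    Jform (DUP.mulVec v) = Jform v := by
  simp [Jform, DUP, Matrix.mulVec, dotProduct, Fin.sum_univ_three]
  ring
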